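/- arXiv:2508.08260 — 2 statements merged into one kernel-verified Lean document; each statement's English description precedes it below -/
import Mathlib

section
/- Let (X,d) be a metric space and K a nonempty subset of X. Let A, B, S, T be selfmaps of K. Suppose there exist φ ∈ Φ, real numbers p > 0, λ > 0 and r ≥ 0, q ≥ 0 such that for all x, y ∈ K: [(d(Sx,Ty))^p + r·(d(Sx,Ty))^q]^λ ≤ φ(max{[(d(Ax,By))^p + r·(d(Ax,Sx))^q]^λ, [(d(Ax,By))^p + r·(d(By,Ty))^q]^λ, [(d(Ax,Sx))^p + r·(d(By,Ty))^q]^λ, [(d(By,Ty))^p + r·(d(Ax,Sx))^q]^λ, min{[(d(By,Sx))^p + r·(d(Ax,Sx))^q]^λ, [(d(Ax,Ty))^p + r·(d(By,Ty))^q]^λ}, min{[(d(By,Sx))^p + r·(d(By,Ty))^q]^λ, [(d(Ax,Ty))^p + r·(d(Ax,Sx))^q]^λ}}). Assume the pairs (A,S) and (B,T) are weakly compatible, T(K) ⊆ A(K) and S(K) ⊆ B(K). If at least one of the sets T(K), S(K), A(K), or B(K) is complete, then A, B, S and T have a unique common fixed point. -/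
/-!
Write `F(a, b) = (a ^ p + r * b ^ q) ^ λ`. Jungck's iteration `B x₂ₙ₊₁ = S x₂ₙ`,
`A x₂ₙ₊₂ = T x₂ₙ₊₁` yields a sequence `y` whose even terms are these `S`/`B`-values and whose odd
terms are the `T`/`A`-values. Along `y` the contractive condition gives
`F(dₙ₊₁, dₙ₊₁) ≤ φ(F(dₙ, dₙ))` for the consecutive distances `dₙ`, so `dₙ → 0`; and because
`φ(F(ε, ε)) < F(ε, ε)`, once the `dₙ` are small the condition keeps all later terms within `ε` of
one of them, so `y` is Cauchy. By completeness its limit `z` lies in `A(K)` or `B(K)`; passing to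
the limit in the condition makes `z` a coincidence value of both pairs `(A, S)` and `(B, T)`, weak
compatibility moves the coincidence to `z` itself, and the condition at a coincidence point of each
pair, `Ax = Sx` and `By = Ty`, forces `Sx = Ty`. This gives the fixed point and its uniqueness.
-/

open Set
open scoped NNReal

def InPhi (φ : ℝ≥0 → ℝ≥0) : Prop :=
  Monotone φ ∧ Continuous φ ∧ ∀ t, 0 < t → 0 < φ t ∧ φ t < t

open Filter Topology

namespace InPhi

variable {φ : ℝ≥0 → ℝ≥0}

theorem eq_zero_of_le_apply (hφ : InPhi φ) {s t : ℝ≥0} (h : t ≤ φ s) (hst : s ≤ t) : t = 0 := by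
  by_contra ht
  exact ((h.trans (hφ.1 hst)).trans_lt (hφ.2.2 t (pos_iff_ne_zero.2 ht)).2).false

theorem apply_le (hφ : InPhi φ) (t : ℝ≥0) : φ t ≤ t := by
  rcases eq_or_ne t 0 with rfl | ht
  · exact (hφ.eq_zero_of_le_apply le_rfl zero_le).le
  · exact (hφ.2.2 t (pos_iff_ne_zero.2 ht)).2.le

theorem le_apply_of_le_apply_max (hφ : InPhi φ) {a b : ℝ≥0} (h : b ≤ φ (max a b)) :
    b ≤ φ a := by
  rcases le_total b a with hba | hab
  · rwa [max_eq_left hba] at h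
  · rw [max_eq_right hab] at h
    simp [hφ.eq_zero_of_le_apply h le_rfl]

theorem tendsto_zero_of_le_apply (hφ : InPhi φ) {M : ℕ → ℝ≥0}
    (hM : ∀ n, M (n + 1) ≤ φ (M n)) : Tendsto M atTop (𝓝 0) := by
  have hanti : Antitone M := antitone_nat_of_succ_le fun n => (hM n).trans (hφ.apply_le _)
  have hlim := tendsto_atTop_ciInf hanti (OrderBot.bddBelow _)
  have hle : ⨅ n, M n ≤ φ (⨅ n, M n) :=
    le_of_tendsto_of_tendsto' (hlim.comp (tendsto_add_atTop_nat 1))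
      ((hφ.2.1.tendsto _).comp hlim) hM
  rwa [hφ.eq_zero_of_le_apply hle le_rfl] at hlim

end InPhi

/-- The properties of `(a, b) ↦ (a ^ p + r * b ^ q) ^ λ` on which the fixed point argument rests. -/
structure IsGauge (F : ℝ≥0 → ℝ≥0 → ℝ≥0) : Prop where
  mono : ∀ ⦃a a' b b' : ℝ≥0⦄, a ≤ a' → b ≤ b' → F a b ≤ F a' b'
  continuous : Continuous fun x : ℝ≥0 × ℝ≥0 => F x.1 x.2
  apply_self_pos : ∀ ⦃a : ℝ≥0⦄, 0 < a → 0 < F a a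

noncomputable def bracket (p q lam : ℝ) (r : ℝ≥0) (a b : ℝ≥0) : ℝ≥0 :=
  (a ^ p + r * b ^ q) ^ lam

theorem isGauge_bracket {p q lam : ℝ} (r : ℝ≥0) (hp : 0 < p) (hq : 0 ≤ q) (hlam : 0 < lam) :
    IsGauge (bracket p q lam r) where
  mono _ _ _ _ ha hb := NNReal.rpow_le_rpow
    (add_le_add (NNReal.rpow_le_rpow ha hp.le)
      (mul_le_mul_of_nonneg_left (NNReal.rpow_le_rpow hb hq) zero_le))
    hlam.le
  continuous := (NNReal.continuous_rpow_const hlam.le).comp <|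
    ((NNReal.continuous_rpow_const hp.le).comp continuous_fst).add
      (continuous_const.mul ((NNReal.continuous_rpow_const hq).comp continuous_snd))
  apply_self_pos a ha := by
    rw [bracket, pos_iff_ne_zero, Ne, NNReal.rpow_eq_zero_iff, add_eq_zero,
      NNReal.rpow_eq_zero_iff]
    simp [ha.ne', hp.ne']

namespace IsGauge

variable {F : ℝ≥0 → ℝ≥0 → ℝ≥0}

theorem monotone_diag (hF : IsGauge F) : Monotone fun a => F a a := fun _ _ h => hF.mono h h

theorem eq_zero_of_apply_self_eq_zero (hF : IsGauge F) {a : ℝ≥0} (h : F a a = 0) : a = 0 := by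
  by_contra ha
  exact (hF.apply_self_pos (pos_iff_ne_zero.2 ha)).ne' h

theorem lt_of_apply_self_lt (hF : IsGauge F) {a b : ℝ≥0} (h : F a a < F b b) : a < b :=
  lt_of_not_ge fun hba => not_lt_of_ge (hF.mono hba hba) h

theorem tendsto {α : Type*} (hF : IsGauge F) {l : Filter α} {u v : α → ℝ≥0} {a b : ℝ≥0}
    (hu : Tendsto u l (𝓝 a)) (hv : Tendsto v l (𝓝 b)) :
    Tendsto (fun k => F (u k) (v k)) l (𝓝 (F a b)) :=
  (hF.continuous.tendsto (a, b)).comp (hu.prodMk_nhds hv)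

theorem tendsto_zero_of_tendsto_apply_self {α : Type*} (hF : IsGauge F) {l : Filter α}
    {u : α → ℝ≥0} (hu : Tendsto (fun k => F (u k) (u k)) l (𝓝 0)) : Tendsto u l (𝓝 0) :=
  tendsto_order.2 ⟨fun _ h => (not_lt_zero h).elim, fun _ hε =>
    ((tendsto_order.1 hu).2 _ (hF.apply_self_pos hε)).mono fun _ => hF.lt_of_apply_self_lt⟩

theorem exists_pos_lt_and_apply_lt {φ : ℝ≥0 → ℝ≥0} (hF : IsGauge F) (hφ : InPhi φ) {ε : ℝ≥0}
    (hε : 0 < ε) :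
    ∃ η > 0, η < ε ∧ φ (F (ε + 2 * η) (ε + 2 * η)) < F ε ε := by
  have hcont : Continuous fun η : ℝ≥0 => φ (F (ε + 2 * η) (ε + 2 * η)) := by
    have h : Continuous fun η : ℝ≥0 => ε + 2 * η := by fun_prop
    exact hφ.2.1.comp (hF.continuous.comp (h.prodMk h))
  have hlt : φ (F (ε + 2 * 0) (ε + 2 * 0)) < F ε ε := by
    simpa using (hφ.2.2 _ (hF.apply_self_pos hε)).2
  have hev := ((hcont.tendsto 0).eventually (gt_mem_nhds hlt)).and (gt_mem_nhds hε)
  obtain ⟨η, ⟨h₁, h₂⟩, h₃⟩ := ((hev.filter_mono nhdsWithin_le_nhds).and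
    (self_mem_nhdsWithin (s := Set.Ioi 0))).exists
  exact ⟨η, h₃, h₂, h₁⟩

end IsGauge

/-- The right-hand side of the contractive condition, as a function of the five distances
`d(Ax,By), d(Ax,Sx), d(By,Ty), d(By,Sx), d(Ax,Ty)`. -/
def contractiveBound (F : ℝ≥0 → ℝ≥0 → ℝ≥0) (dAB dAS dBT dBS dAT : ℝ≥0) : ℝ≥0 :=
  max (F dAB dAS) (max (F dAB dBT) (max (F dAS dBT) (max (F dBT dAS)
    (max (min (F dBS dAS) (F dAT dBT)) (min (F dBS dBT) (F dAT dAS))))))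

theorem contractiveBound_comm (F : ℝ≥0 → ℝ≥0 → ℝ≥0) (dAB dAS dBT dBS dAT : ℝ≥0) :
    contractiveBound F dAB dAS dBT dBS dAT = contractiveBound F dAB dBT dAS dAT dBS := by
  simp only [contractiveBound]
  ac_rfl

namespace IsGauge

variable {F : ℝ≥0 → ℝ≥0 → ℝ≥0} {φ : ℝ≥0 → ℝ≥0} {dAB dAS dBT dBS dAT : ℝ≥0}

theorem contractiveBound_le (hF : IsGauge F) {δ : ℝ≥0} (hAB : dAB ≤ δ) (hAS : dAS ≤ δ)
    (hBT : dBT ≤ δ) (hBS_AT : dBS ≤ δ ∨ dAT ≤ δ) :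
    contractiveBound F dAB dAS dBT dBS dAT ≤ F δ δ := by
  have hmin : ∀ {a b}, a ≤ δ → b ≤ δ → min (F dBS a) (F dAT b) ≤ F δ δ := fun ha hb =>
    hBS_AT.elim (fun h => (min_le_left _ _).trans (hF.mono h ha))
      fun h => (min_le_right _ _).trans (hF.mono h hb)
  exact max_le (hF.mono hAB hAS) (max_le (hF.mono hAB hBT) (max_le (hF.mono hAS hBT)
    (max_le (hF.mono hBT hAS) (max_le (hmin hAS hBT) (hmin hBT hAS)))))

theorem eq_zero_of_le_apply_contractiveBound (hF : IsGauge F) (hφ : InPhi φ) {δ : ℝ≥0}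
    (H : F δ δ ≤ φ (contractiveBound F dAB dAS dBT dBS dAT)) (hAB : dAB ≤ δ) (hAS : dAS ≤ δ)
    (hBT : dBT ≤ δ) (hBS_AT : dBS ≤ δ ∨ dAT ≤ δ) : δ = 0 :=
  hF.eq_zero_of_apply_self_eq_zero <| hφ.eq_zero_of_le_apply
    (H.trans (hφ.1 (hF.contractiveBound_le hAB hAS hBT hBS_AT))) le_rfl

theorem le_apply_of_le_apply_contractiveBound (hF : IsGauge F) (hφ : InPhi φ) {a b : ℝ≥0}
    (H : F b b ≤ φ (contractiveBound F dAB dAS dBT dBS dAT)) (hAB : dAB ≤ max a b)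
    (hAS : dAS ≤ max a b) (hBT : dBT ≤ max a b) (hBS_AT : dBS ≤ max a b ∨ dAT ≤ max a b) :
    F b b ≤ φ (F a a) := by
  refine hφ.le_apply_of_le_apply_max ?_
  rw [← hF.monotone_diag.map_max]
  exact H.trans (hφ.1 (hF.contractiveBound_le hAB hAS hBT hBS_AT))

theorem tendsto_contractiveBound {α : Type*} (hF : IsGauge F) {l : Filter α}
    {u₁ u₂ u₃ u₄ u₅ : α → ℝ≥0} (h₁ : Tendsto u₁ l (𝓝 dAB)) (h₂ : Tendsto u₂ l (𝓝 dAS))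
    (h₃ : Tendsto u₃ l (𝓝 dBT)) (h₄ : Tendsto u₄ l (𝓝 dBS)) (h₅ : Tendsto u₅ l (𝓝 dAT)) :
    Tendsto (fun k => contractiveBound F (u₁ k) (u₂ k) (u₃ k) (u₄ k) (u₅ k)) l
      (𝓝 (contractiveBound F dAB dAS dBT dBS dAT)) :=
  (hF.tendsto h₁ h₂).max <| (hF.tendsto h₁ h₃).max <| (hF.tendsto h₂ h₃).max <|
    (hF.tendsto h₃ h₂).max <| ((hF.tendsto h₄ h₂).min (hF.tendsto h₅ h₃)).max
      ((hF.tendsto h₄ h₃).min (hF.tendsto h₅ h₂))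

end IsGauge

section

variable {X : Type*} [MetricSpace X] {φ : ℝ≥0 → ℝ≥0} {F : ℝ≥0 → ℝ≥0 → ℝ≥0} {K : Set X}
  {A B S T : X → X}

def Contractive (φ : ℝ≥0 → ℝ≥0) (F : ℝ≥0 → ℝ≥0 → ℝ≥0) (K : Set X) (A B S T : X → X) : Prop :=
  ∀ x ∈ K, ∀ y ∈ K, F (nndist (S x) (T y)) (nndist (S x) (T y)) ≤
    φ (contractiveBound F (nndist (A x) (B y)) (nndist (A x) (S x)) (nndist (B y) (T y))
      (nndist (B y) (S x)) (nndist (A x) (T y)))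

namespace Contractive

theorem symm (hc : Contractive φ F K A B S T) : Contractive φ F K B A T S := fun x hx y hy => by
  rw [nndist_comm (T x), nndist_comm (B x) (A y), contractiveBound_comm]
  exact hc y hy x hx

theorem eq_of_nndist_le (hc : Contractive φ F K A B S T) (hF : IsGauge F) (hφ : InPhi φ)
    {x y : X} (hx : x ∈ K) (hy : y ∈ K) (hAB : nndist (A x) (B y) ≤ nndist (S x) (T y))
    (hAS : nndist (A x) (S x) ≤ nndist (S x) (T y))
    (hBT : nndist (B y) (T y) ≤ nndist (S x) (T y))
    (hBS_AT : nndist (B y) (S x) ≤ nndist (S x) (T y) ∨ nndist (A x) (T y) ≤ nndist (S x) (T y)) :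
    S x = T y :=
  nndist_eq_zero.1 <| hF.eq_zero_of_le_apply_contractiveBound hφ (hc x hx y hy) hAB hAS hBT hBS_AT

theorem eq_of_coincidence (hc : Contractive φ F K A B S T) (hF : IsGauge F) (hφ : InPhi φ)
    {x y : X} (hx : x ∈ K) (hy : y ∈ K) (hASx : A x = S x) (hBTy : B y = T y) : S x = T y :=
  hc.eq_of_nndist_le hF hφ hx hy (by rw [hASx, hBTy]) (by simp [hASx]) (by simp [hBTy])
    (.inr (by rw [hASx]))

theorem eq_of_coincidence_of_eq (hc : Contractive φ F K A B S T) (hF : IsGauge F)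
    (hφ : InPhi φ) {x y : X} (hx : x ∈ K) (hy : y ∈ K) (hASx : A x = S x) (hBy : B y = S x) :
    T y = S x :=
  (hc.eq_of_nndist_le hF hφ hx hy (by simp [hASx, hBy]) (by simp [hASx]) (by rw [hBy])
    (.inl (by simp [hBy]))).symm

theorem exists_coincidence_of_tendsto (hc : Contractive φ F K A B S T) (hF : IsGauge F)
    (hφ : InPhi φ) (hSB : S '' K ⊆ B '' K) {u z : X} (hu : u ∈ K) (hAu : A u = z)
    {x : ℕ → X} (hx : ∀ n, x n ∈ K) (hBx : Tendsto (fun n => B (x n)) atTop (𝓝 z))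
    (hTx : Tendsto (fun n => T (x n)) atTop (𝓝 z)) :
    S u = z ∧ ∃ v ∈ K, B v = z ∧ T v = z := by
  have hlim : F (nndist (S u) z) (nndist (S u) z) ≤
      φ (contractiveBound F 0 (nndist z (S u)) 0 (nndist z (S u)) 0) := by
    have h0 : ∀ {f g : ℕ → X}, Tendsto f atTop (𝓝 z) → Tendsto g atTop (𝓝 z) →
        Tendsto (fun n => nndist (f n) (g n)) atTop (𝓝 0) := fun hf hg => by
      simpa using hf.nndist hg
    have hSuT := (tendsto_const_nhds (x := S u)).nndist hTx
    exact le_of_tendsto_of_tendsto' (hF.tendsto hSuT hSuT) ((hφ.2.1.tendsto _).comp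
      (hF.tendsto_contractiveBound (h0 tendsto_const_nhds hBx) tendsto_const_nhds (h0 hBx hTx)
        (hBx.nndist tendsto_const_nhds) (h0 tendsto_const_nhds hTx)))
      fun n => hAu ▸ hc u hu (x n) (hx n)
  have hSu : S u = z := nndist_eq_zero.1 <| hF.eq_zero_of_le_apply_contractiveBound hφ hlim
    zero_le (nndist_comm _ _).le zero_le (.inr zero_le)
  obtain ⟨v, hv, hBv⟩ := hSB ⟨u, hu, hSu⟩
  exact ⟨hSu, v, hv, hBv, hSu ▸ hc.eq_of_coincidence_of_eq hF hφ hu hv (hAu.trans hSu.symm)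
    (hBv.trans hSu.symm)⟩

end Contractive

end

structure IsJungckSeq {X : Type*} (K : Set X) (A B S T : X → X) (x y : ℕ → X) : Prop where
  mem : ∀ n, x n ∈ K
  S_eq : ∀ n, S (x (2 * n)) = y (2 * n)
  B_eq : ∀ n, B (x (2 * n + 1)) = y (2 * n)
  T_eq : ∀ n, T (x (2 * n + 1)) = y (2 * n + 1)
  A_eq : ∀ n, A (x (2 * (n + 1))) = y (2 * n + 1)

theorem exists_isJungckSeq {X : Type*} {K : Set X} (hK : K.Nonempty) {A B S T : X → X}
    (hTA : T '' K ⊆ A '' K) (hSB : S '' K ⊆ B '' K) : ∃ x y, IsJungckSeq K A B S T x y := by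
  obtain ⟨x₀, hx₀⟩ := hK
  have hf : ∀ u : K, ∃ v : K, B v = S u := fun u => by
    obtain ⟨v, hv, h⟩ := hSB (mem_image_of_mem S u.2)
    exact ⟨⟨v, hv⟩, h⟩
  have hg : ∀ u : K, ∃ v : K, A v = T u := fun u => by
    obtain ⟨v, hv, h⟩ := hTA (mem_image_of_mem T u.2)
    exact ⟨⟨v, hv⟩, h⟩
  choose f hf using hf
  choose g hg using hg
  let x : ℕ → K := fun n => Nat.rec ⟨x₀, hx₀⟩ (fun k u => if Even k then f u else g u) n
  have hx_odd (n : ℕ) : x (2 * n + 1) = f (x (2 * n)) := if_pos (even_two_mul n)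
  have hx_even (n : ℕ) : x (2 * (n + 1)) = g (x (2 * n + 1)) :=
    if_neg (Nat.not_even_two_mul_add_one n)
  refine ⟨fun n => (x n).1, fun n => if Even n then S (x n).1 else T (x n).1,
    ⟨fun n => (x n).2, fun n => by simp, fun n => ?_, fun n => by simp, fun n => ?_⟩⟩
  · simp [hx_odd, hf]
  · simp [hx_even, hg]

section Sequence

variable {X : Type*} [MetricSpace X] {φ : ℝ≥0 → ℝ≥0} {F : ℝ≥0 → ℝ≥0 → ℝ≥0} {y : ℕ → X}

/-- The contractive condition at the pairs `(x (2j+2), x (2m+1))` of a Jungck sequence `(x, y)`,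
written in terms of `y` alone. -/
def ContractiveSeq (φ : ℝ≥0 → ℝ≥0) (F : ℝ≥0 → ℝ≥0 → ℝ≥0) (y : ℕ → X) : Prop :=
  ∀ j m, F (nndist (y (2 * (j + 1))) (y (2 * m + 1))) (nndist (y (2 * (j + 1))) (y (2 * m + 1))) ≤
    φ (contractiveBound F (nndist (y (2 * j + 1)) (y (2 * m)))
      (nndist (y (2 * j + 1)) (y (2 * (j + 1)))) (nndist (y (2 * m)) (y (2 * m + 1)))
      (nndist (y (2 * m)) (y (2 * (j + 1))))
      (nndist (y (2 * j + 1)) (y (2 * m + 1))))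

namespace ContractiveSeq

theorem apply_nndist_succ_le (hy : ContractiveSeq φ F y) (hF : IsGauge F) (hφ : InPhi φ) (n : ℕ) :
    F (nndist (y (n + 1)) (y (n + 2))) (nndist (y (n + 1)) (y (n + 2))) ≤
      φ (F (nndist (y n) (y (n + 1))) (nndist (y n) (y (n + 1)))) := by
  obtain ⟨m, rfl | rfl⟩ := Nat.even_or_odd' n
  · have H := hy m m
    rw [nndist_comm (y (2 * (m + 1)))] at H
    exact hF.le_apply_of_le_apply_contractiveBound hφ H
      ((nndist_comm _ _).trans_le (le_max_left _ _))
      (le_max_right _ _) (le_max_left _ _) (.inr (by simp))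
  · exact hF.le_apply_of_le_apply_contractiveBound hφ (hy m (m + 1)) (le_max_left _ _)
      (le_max_left _ _) (le_max_right _ _) (.inl (by simp))

theorem tendsto_nndist_succ (hy : ContractiveSeq φ F y) (hF : IsGauge F) (hφ : InPhi φ) :
    Tendsto (fun n => nndist (y n) (y (n + 1))) atTop (𝓝 0) :=
  hF.tendsto_zero_of_tendsto_apply_self <|
    hφ.tendsto_zero_of_le_apply (hy.apply_nndist_succ_le hF hφ)

/-- The triangle inequality keeps every argument of `contractiveBound` below `ε + 2η`, and `hη`
pulls the new distance back below `ε`. -/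
theorem nndist_lt {ε η : ℝ≥0} (hy : ContractiveSeq φ F y) (hF : IsGauge F) (hφ : InPhi φ)
    (hη : φ (F (ε + 2 * η) (ε + 2 * η)) < F ε ε) (hηε : η ≤ ε) {m : ℕ}
    (hd : ∀ n ≥ 2 * m, nndist (y n) (y (n + 1)) < η) :
    ∀ j ≥ m, nndist (y (2 * m + 1)) (y (2 * j)) < ε := by
  refine Nat.le_induction ((nndist_comm _ _).trans_lt ((hd _ le_rfl).trans_le hηε)) ?_
  intro j hj ih
  have h₀ := hd (2 * j) (by omega)
  have h₁ := hd (2 * j + 1) (by omega)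
  have h₂ := hd (2 * m) le_rfl
  have hAT : nndist (y (2 * j + 1)) (y (2 * m + 1)) < η + ε := by
    linarith [nndist_triangle (y (2 * j + 1)) (y (2 * j)) (y (2 * m + 1)),
      nndist_comm (y (2 * j + 1)) (y (2 * j)), nndist_comm (y (2 * m + 1)) (y (2 * j))]
  have hAB : nndist (y (2 * j + 1)) (y (2 * m)) ≤ ε + 2 * η := by
    linarith [nndist_triangle (y (2 * j + 1)) (y (2 * m + 1)) (y (2 * m)),
      nndist_comm (y (2 * m + 1)) (y (2 * m))]
  have hη' : η ≤ ε + 2 * η := by linarith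
  rw [nndist_comm]
  exact hF.lt_of_apply_self_lt <| ((hy j m).trans <| hφ.1 <| hF.contractiveBound_le hAB
    (h₁.le.trans hη') (h₂.le.trans hη') (.inr (hAT.le.trans (by linarith)))).trans_lt hη

theorem cauchySeq (hy : ContractiveSeq φ F y) (hF : IsGauge F) (hφ : InPhi φ) : CauchySeq y := by
  refine Metric.cauchySeq_iff'.2 fun ε hε => ?_
  lift ε to ℝ≥0 using hε.le
  obtain ⟨η, hη0, hηε, hη⟩ := hF.exists_pos_lt_and_apply_lt hφ (half_pos (NNReal.coe_pos.1 hε))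
  obtain ⟨N, hN⟩ := eventually_atTop.1 ((tendsto_order.1 (hy.tendsto_nndist_succ hF hφ)).2 η hη0)
  have hball := hy.nndist_lt hF hφ hη hηε.le (m := N) fun n hn => hN n (by omega)
  refine ⟨2 * N + 1, fun n hn => ?_⟩
  rw [dist_nndist, NNReal.coe_lt_coe, nndist_comm]
  obtain ⟨j, rfl | rfl⟩ := Nat.even_or_odd' n
  · exact (hball j (by omega)).trans (half_lt_self (NNReal.coe_pos.1 hε))
  · linarith [hball j (by omega), nndist_triangle (y (2 * N + 1)) (y (2 * j)) (y (2 * j + 1)),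
      hN (2 * j) (by omega), add_halves ε]

end ContractiveSeq

end Sequence

theorem tendsto_two_mul_atTop : Tendsto (fun n : ℕ => 2 * n) atTop atTop :=
  tendsto_atTop_mono (fun n => show n ≤ 2 * n by omega) tendsto_id

theorem tendsto_two_mul_add_one_atTop : Tendsto (fun n : ℕ => 2 * n + 1) atTop atTop :=
  tendsto_atTop_mono (fun n => show n ≤ 2 * n + 1 by omega) tendsto_id

theorem CauchySeq.exists_tendsto_of_subseq_mem {X : Type*} [UniformSpace X] {y : ℕ → X}
    (hy : CauchySeq y) {C : Set X} (hC : IsComplete C) {g : ℕ → ℕ} (hg : Tendsto g atTop atTop)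
    (hmem : ∀ n, y (g n) ∈ C) : ∃ z ∈ C, Tendsto y atTop (𝓝 z) := by
  obtain ⟨z, hz, hlim⟩ := cauchySeq_tendsto_of_isComplete hC hmem (hy.comp_tendsto hg)
  exact ⟨z, hz, tendsto_nhds_of_cauchySeq_of_subseq hy hg hlim⟩

namespace IsJungckSeq

variable {X : Type*} [MetricSpace X] {K : Set X} {A B S T : X → X} {x y : ℕ → X}

theorem contractiveSeq {φ : ℝ≥0 → ℝ≥0} {F : ℝ≥0 → ℝ≥0 → ℝ≥0} (hxy : IsJungckSeq K A B S T x y)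
    (hc : Contractive φ F K A B S T) : ContractiveSeq φ F y := fun j m => by
  simpa only [hxy.S_eq, hxy.T_eq, hxy.A_eq, hxy.B_eq] using
    hc _ (hxy.mem (2 * (j + 1))) _ (hxy.mem (2 * m + 1))

theorem exists_tendsto (hxy : IsJungckSeq K A B S T x y) (hy : CauchySeq y)
    (hTA : T '' K ⊆ A '' K) (hSB : S '' K ⊆ B '' K)
    (hcomp : IsComplete (T '' K) ∨ IsComplete (S '' K) ∨
      IsComplete (A '' K) ∨ IsComplete (B '' K)) :
    ∃ z, (z ∈ A '' K ∨ z ∈ B '' K) ∧ Tendsto y atTop (𝓝 z) := by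
  have hev := tendsto_two_mul_atTop
  have hodd := tendsto_two_mul_add_one_atTop
  rcases hcomp with hC | hC | hC | hC
  · obtain ⟨z, hzC, hz⟩ :=
      hy.exists_tendsto_of_subseq_mem hC hodd fun n => ⟨_, hxy.mem _, hxy.T_eq n⟩
    exact ⟨z, .inl (hTA hzC), hz⟩
  · obtain ⟨z, hzC, hz⟩ :=
      hy.exists_tendsto_of_subseq_mem hC hev fun n => ⟨_, hxy.mem _, hxy.S_eq n⟩
    exact ⟨z, .inr (hSB hzC), hz⟩
  · obtain ⟨z, hzC, hz⟩ :=
      hy.exists_tendsto_of_subseq_mem hC hodd fun n => ⟨_, hxy.mem _, hxy.A_eq n⟩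
    exact ⟨z, .inl hzC, hz⟩
  · obtain ⟨z, hzC, hz⟩ :=
      hy.exists_tendsto_of_subseq_mem hC hev fun n => ⟨_, hxy.mem _, hxy.B_eq n⟩
    exact ⟨z, .inr hzC, hz⟩

theorem exists_coincidence {φ : ℝ≥0 → ℝ≥0} {F : ℝ≥0 → ℝ≥0 → ℝ≥0}
    (hxy : IsJungckSeq K A B S T x y) (hc : Contractive φ F K A B S T) (hF : IsGauge F)
    (hφ : InPhi φ) (hTA : T '' K ⊆ A '' K) (hSB : S '' K ⊆ B '' K) {z : X}
    (hz : Tendsto y atTop (𝓝 z)) (hzAB : z ∈ A '' K ∨ z ∈ B '' K) :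
    ∃ u ∈ K, ∃ v ∈ K, A u = z ∧ S u = z ∧ B v = z ∧ T v = z := by
  have hev := hz.comp tendsto_two_mul_atTop
  have hodd := hz.comp tendsto_two_mul_add_one_atTop
  -- the two cases are exchanged by the symmetry `(A, S) ↔ (B, T)` of the contractive condition
  rcases hzAB with ⟨u, hu, hAu⟩ | ⟨v, hv, hBv⟩
  · obtain ⟨hSu, v, hv, hBv, hTv⟩ := hc.exists_coincidence_of_tendsto hF hφ hSB hu hAu
      (fun n => hxy.mem _) (hev.congr fun n => (hxy.B_eq n).symm)
      (hodd.congr fun n => (hxy.T_eq n).symm)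
    exact ⟨u, hu, v, hv, hAu, hSu, hBv, hTv⟩
  · obtain ⟨hTv, u, hu, hAu, hSu⟩ := hc.symm.exists_coincidence_of_tendsto hF hφ hTA hv hBv
      (fun n => hxy.mem (2 * (n + 1))) (hodd.congr fun n => (hxy.A_eq n).symm)
      ((hev.comp (tendsto_add_atTop_nat 1)).congr fun n => (hxy.S_eq (n + 1)).symm)
    exact ⟨u, hu, v, hv, hAu, hSu, hBv, hTv⟩

end IsJungckSeq

theorem stmt_3_general {X : Type*} [MetricSpace X] (K : Set X) (hK : K.Nonempty)
    (A B S T : X → X)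
    (hA : MapsTo A K K)
    (φ : ℝ≥0 → ℝ≥0) (hφ : InPhi φ)
    (p lam q : ℝ) (r : ℝ≥0) (hp : 0 < p) (hlam : 0 < lam) (hq : 0 ≤ q)
    (hcontr : ∀ x ∈ K, ∀ y ∈ K,
      ((nndist (S x) (T y)) ^ p + r * (nndist (S x) (T y)) ^ q) ^ lam ≤
        φ (max (((nndist (A x) (B y)) ^ p + r * (nndist (A x) (S x)) ^ q) ^ lam)
          (max (((nndist (A x) (B y)) ^ p + r * (nndist (B y) (T y)) ^ q) ^ lam)
          (max (((nndist (A x) (S x)) ^ p + r * (nndist (B y) (T y)) ^ q) ^ lam)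
          (max (((nndist (B y) (T y)) ^ p + r * (nndist (A x) (S x)) ^ q) ^ lam)
          (max (min (((nndist (B y) (S x)) ^ p + r * (nndist (A x) (S x)) ^ q) ^ lam)
                    (((nndist (A x) (T y)) ^ p + r * (nndist (B y) (T y)) ^ q) ^ lam))
               (min (((nndist (B y) (S x)) ^ p + r * (nndist (B y) (T y)) ^ q) ^ lam)
                    (((nndist (A x) (T y)) ^ p + r * (nndist (A x) (S x)) ^ q) ^ lam))))))))
    (hAS : ∀ x ∈ K, A x = S x → A (S x) = S (A x))
    (hBT : ∀ x ∈ K, B x = T x → B (T x) = T (B x))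
    (hTA : T '' K ⊆ A '' K)
    (hSB : S '' K ⊆ B '' K)
    (hcomp : IsComplete (T '' K) ∨ IsComplete (S '' K) ∨
             IsComplete (A '' K) ∨ IsComplete (B '' K)) :
    ∃! z, z ∈ K ∧ A z = z ∧ B z = z ∧ S z = z ∧ T z = z := by
  have hF := isGauge_bracket r hp hq hlam
  have hc : Contractive φ (bracket p q lam r) K A B S T := hcontr
  obtain ⟨x, y, hxy⟩ := exists_isJungckSeq hK hTA hSB
  obtain ⟨z, hzAB, hz⟩ := hxy.exists_tendsto ((hxy.contractiveSeq hc).cauchySeq hF hφ) hTA hSB hcomp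
  obtain ⟨u, hu, v, hv, hAu, hSu, hBv, hTv⟩ := hxy.exists_coincidence hc hF hφ hTA hSB hz hzAB
  have hzK : z ∈ K := hAu ▸ hA hu
  have hAz : A z = S z := by simpa only [hSu, hAu] using hAS u hu (hAu.trans hSu.symm)
  have hBz : B z = T z := by simpa only [hTv, hBv] using hBT v hv (hBv.trans hTv.symm)
  have hSz : S z = z := (hc.eq_of_coincidence hF hφ hzK hv hAz (hBv.trans hTv.symm)).trans hTv
  have hTz : T z = z :=
    (hc.eq_of_coincidence hF hφ hu hzK (hAu.trans hSu.symm) hBz).symm.trans hSu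
  refine ⟨z, ⟨hzK, hAz.trans hSz, hBz.trans hTz, hSz, hTz⟩, fun w ⟨hw, _, hBw, _, hTw⟩ => ?_⟩
  rw [← hTw, ← hc.eq_of_coincidence hF hφ hzK hw hAz (hBw.trans hTw.symm), hSz]

theorem stmt_3 {X : Type*} [MetricSpace X] (K : Set X) (hK : K.Nonempty)
    (A B S T : X → X)
    (hA : MapsTo A K K) (hB : MapsTo B K K) (hS : MapsTo S K K) (hT : MapsTo T K K)
    (φ : ℝ≥0 → ℝ≥0) (hφ : InPhi φ)
    (p lam q : ℝ) (r : ℝ≥0) (hp : 0 < p) (hlam : 0 < lam) (hq : 0 ≤ q)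
    (hcontr : ∀ x ∈ K, ∀ y ∈ K,
      ((nndist (S x) (T y)) ^ p + r * (nndist (S x) (T y)) ^ q) ^ lam ≤
        φ (max (((nndist (A x) (B y)) ^ p + r * (nndist (A x) (S x)) ^ q) ^ lam)
          (max (((nndist (A x) (B y)) ^ p + r * (nndist (B y) (T y)) ^ q) ^ lam)
          (max (((nndist (A x) (S x)) ^ p + r * (nndist (B y) (T y)) ^ q) ^ lam)
          (max (((nndist (B y) (T y)) ^ p + r * (nndist (A x) (S x)) ^ q) ^ lam)
          (max (min (((nndist (B y) (S x)) ^ p + r * (nndist (A x) (S x)) ^ q) ^ lam)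
                    (((nndist (A x) (T y)) ^ p + r * (nndist (B y) (T y)) ^ q) ^ lam))
               (min (((nndist (B y) (S x)) ^ p + r * (nndist (B y) (T y)) ^ q) ^ lam)
                    (((nndist (A x) (T y)) ^ p + r * (nndist (A x) (S x)) ^ q) ^ lam))))))))
    (hAS : ∀ x ∈ K, A x = S x → A (S x) = S (A x))
    (hBT : ∀ x ∈ K, B x = T x → B (T x) = T (B x))
    (hTA : T '' K ⊆ A '' K)
    (hSB : S '' K ⊆ B '' K)
    (hcomp : IsComplete (T '' K) ∨ IsComplete (S '' K) ∨
             IsComplete (A '' K) ∨ IsComplete (B '' K)) :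
    ∃! z, z ∈ K ∧ A z = z ∧ B z = z ∧ S z = z ∧ T z = z :=
  stmt_3_general K hK A B S T hA φ hφ p lam q r hp hlam hq hcontr hAS hBT hTA hSB hcomp
end

section
/- Let (X,d) be a metric space, K a nonempty subset of X, and A, B, S, T selfmaps of K satisfying, for some function ψ satisfying Condition-A and some φ ∈ Φ, the contractive inequality ψ(d(Sx,Ty), d(Sx,Ty)) ≤ φ(max{ψ(d(Ax,By), d(Ax,Sx)), ψ(d(Ax,By), d(By,Ty)), ψ(d(Ax,Sx), d(By,Ty)), ψ(d(By,Ty), d(Ax,Sx)), min{ψ(d(By,Sx), d(Ax,Sx)), ψ(d(Ax,Ty), d(By,Ty))}, min{ψ(d(By,Sx), d(By,Ty)), ψ(d(Ax,Ty), d(Ax,Sx))}}) for all x, y ∈ K. Then A, B, S, T have at most one common fixed point: if z and w satisfy Az = Bz = Sz = Tz = z and Aw = Bw = Sw = Tw = w, then z = w. -/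
open Set
open scoped NNReal

/-- A two-variable auxiliary function satisfying Condition-A. -/
def ConditionA (ψ : ℝ≥0 → ℝ≥0 → ℝ≥0) : Prop :=
  Continuous (Function.uncurry ψ) ∧
  (∀ t, Monotone fun s => ψ s t) ∧
  (∀ s, Monotone fun t => ψ s t) ∧
  ψ 0 0 = 0 ∧
  ∀ t, ψ t 0 = 0 → t = 0

/-
For common fixed points `z, w` with `t = d(z, w)`, the displacements `d(Az, Sz)` and `d(Bw, Tw)`
vanish and every other distance in the contractive inequality equals `t`, so it collapses to
`ψ(t,t) ≤ φ(ψ(t,0)) ≤ φ(ψ(t,t))`. Since `φ(s) < s` for `s > 0`, this forces `ψ(t,t) = 0`, hence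
`ψ(t,0) = 0` by monotonicity, and `t = 0` by Condition-A.
-/

lemma InPhi.eq_zero_of_le_apply_s17 {φ : ℝ≥0 → ℝ≥0} (hφ : InPhi φ) {a : ℝ≥0} (h : a ≤ φ a) :
    a = 0 := by
  by_contra ha
  exact (hφ.2.2 a (pos_iff_ne_zero.mpr ha)).2.not_ge h

namespace ConditionA

variable {ψ : ℝ≥0 → ℝ≥0 → ℝ≥0}

lemma apply_zero_le (hψ : ConditionA ψ) (s t : ℝ≥0) : ψ s 0 ≤ ψ s t :=
  hψ.2.2.1 s (zero_le : 0 ≤ t)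

lemma eq_zero_of_apply_self_eq_zero (hψ : ConditionA ψ) {t : ℝ≥0} (h : ψ t t = 0) : t = 0 :=
  hψ.2.2.2.2 t (le_antisymm (h ▸ hψ.apply_zero_le t t) zero_le)

end ConditionA

theorem stmt_17_general {X : Type*} [MetricSpace X] (K : Set X)
    (A B S T : X → X)
    (ψ : ℝ≥0 → ℝ≥0 → ℝ≥0) (hψ : ConditionA ψ)
    (φ : ℝ≥0 → ℝ≥0) (hφ : InPhi φ)
    (hcontr : ∀ x ∈ K, ∀ y ∈ K,
      ψ (nndist (S x) (T y)) (nndist (S x) (T y)) ≤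
        φ (max (ψ (nndist (A x) (B y)) (nndist (A x) (S x)))
          (max (ψ (nndist (A x) (B y)) (nndist (B y) (T y)))
          (max (ψ (nndist (A x) (S x)) (nndist (B y) (T y)))
          (max (ψ (nndist (B y) (T y)) (nndist (A x) (S x)))
          (max (min (ψ (nndist (B y) (S x)) (nndist (A x) (S x)))
                    (ψ (nndist (A x) (T y)) (nndist (B y) (T y))))
               (min (ψ (nndist (B y) (S x)) (nndist (B y) (T y)))
                    (ψ (nndist (A x) (T y)) (nndist (A x) (S x))))))))))
    (z w : X) (hz : z ∈ K) (hw : w ∈ K)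
    (hzfix : A z = z ∧ B z = z ∧ S z = z ∧ T z = z)
    (hwfix : A w = w ∧ B w = w ∧ S w = w ∧ T w = w) :
    z = w := by
  obtain ⟨hAz, -, hSz, -⟩ := hzfix
  obtain ⟨-, hBw, -, hTw⟩ := hwfix
  have h := hcontr z hz w hw
  rw [hAz, hBw, hSz, hTw] at h
  simp only [nndist_self, nndist_comm w z, min_self] at h
  set t := nndist z w
  have h00 : ψ 0 0 ≤ ψ t 0 := hψ.2.1 0 (zero_le : 0 ≤ t)
  have hmax : max (ψ t 0) (max (ψ t 0) (max (ψ 0 0) (max (ψ 0 0) (max (ψ t 0) (ψ t 0)))))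
      = ψ t 0 := by
    simp [h00]
  rw [hmax] at h
  have hself : ψ t t ≤ φ (ψ t t) := h.trans (hφ.1 (hψ.apply_zero_le t t))
  exact nndist_eq_zero.mp (hψ.eq_zero_of_apply_self_eq_zero (hφ.eq_zero_of_le_apply_s17 hself))

theorem stmt_17 {X : Type*} [MetricSpace X] (K : Set X) (hK : K.Nonempty)
    (A B S T : X → X)
    (hA : MapsTo A K K) (hB : MapsTo B K K) (hS : MapsTo S K K) (hT : MapsTo T K K)
    (ψ : ℝ≥0 → ℝ≥0 → ℝ≥0) (hψ : ConditionA ψ)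
    (φ : ℝ≥0 → ℝ≥0) (hφ : InPhi φ)
    (hcontr : ∀ x ∈ K, ∀ y ∈ K,
      ψ (nndist (S x) (T y)) (nndist (S x) (T y)) ≤
        φ (max (ψ (nndist (A x) (B y)) (nndist (A x) (S x)))
          (max (ψ (nndist (A x) (B y)) (nndist (B y) (T y)))
          (max (ψ (nndist (A x) (S x)) (nndist (B y) (T y)))
          (max (ψ (nndist (B y) (T y)) (nndist (A x) (S x)))
          (max (min (ψ (nndist (B y) (S x)) (nndist (A x) (S x)))
                    (ψ (nndist (A x) (T y)) (nndist (B y) (T y))))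
               (min (ψ (nndist (B y) (S x)) (nndist (B y) (T y)))
                    (ψ (nndist (A x) (T y)) (nndist (A x) (S x))))))))))
    (z w : X) (hz : z ∈ K) (hw : w ∈ K)
    (hzfix : A z = z ∧ B z = z ∧ S z = z ∧ T z = z)
    (hwfix : A w = w ∧ B w = w ∧ S w = w ∧ T w = w) :
    z = w :=
  stmt_17_general K A B S T ψ hψ φ hφ hcontr z w hz hw hzfix hwfix
end
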